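/- arXiv:2008.10944 — 4 statements merged into one kernel-verified Lean document; each statement's English description precedes it below -/
import Mathlib

section
/- Let 0 ≤ α < 1 and 0 ≤ N < 1 be real numbers with Nα < 1 (which holds automatically). Then ∑_{k=0}^∞ (∑_{i=0}^k N^{k-i} α^i)² = (1/(1-α²)) · ((1+Nα)/(1-Nα)) · (1/(1-N²)). -/
/-!
Write `s k` for the inner sum. It satisfies two recurrences,
`s (k + 1) = N * s k + α ^ (k + 1) = α * s k + N ^ (k + 1)`.
Multiplying the second by `α ^ (k + 1)` and summing gives `(1 - α²) T = 1 / (1 - Nα)` for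
`T = ∑ α ^ k * s k`; squaring the first and summing gives
`(1 - N²) ∑ s k ^ 2 = 1 + 2Nα T + α² / (1 - α²)`. Summability comes from `s` being a Cauchy
product of two geometric sequences.
-/

open Finset

def completeHomogeneous {R : Type*} [CommSemiring R] (x y : R) (k : ℕ) : R :=
  ∑ i ∈ range (k + 1), x ^ (k - i) * y ^ i

namespace completeHomogeneous

variable {R : Type*} [CommSemiring R] (x y : R)

@[simp]
theorem zero : completeHomogeneous x y 0 = 1 := by
  simp [completeHomogeneous]

theorem succ (k : ℕ) :
    completeHomogeneous x y (k + 1) = x * completeHomogeneous x y k + y ^ (k + 1) := by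
  rw [completeHomogeneous, sum_range_succ, Nat.sub_self, pow_zero, one_mul, completeHomogeneous,
    mul_sum]
  congr 1
  refine sum_congr rfl fun i hi => ?_
  rw [Nat.sub_add_comm (Nat.le_of_lt_succ (mem_range.mp hi)), pow_succ', mul_assoc]

theorem comm (k : ℕ) : completeHomogeneous x y k = completeHomogeneous y x k := by
  rw [completeHomogeneous, completeHomogeneous, ← sum_range_reflect]
  refine sum_congr rfl fun i hi => ?_
  rw [Nat.add_sub_cancel, Nat.sub_sub_self (Nat.le_of_lt_succ (mem_range.mp hi)), mul_comm]

theorem succ' (k : ℕ) :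
    completeHomogeneous x y (k + 1) = y * completeHomogeneous x y k + x ^ (k + 1) := by
  rw [comm, succ, comm]

end completeHomogeneous

theorem HasSum.one_sub_mul_eq_of_succ {R : Type*} [CommRing R] [TopologicalSpace R]
    [IsTopologicalRing R] [T2Space R] {u v : ℕ → R} {a b c : R} (hu : HasSum u a)
    (hv : HasSum v b) (hrec : ∀ k, u (k + 1) = c * u k + v k) : (1 - c) * a = u 0 + b := by
  have hshift : HasSum (fun k => u (k + 1)) (a - u 0) := by
    simpa using (hasSum_nat_add_iff' 1).mpr hu
  have hrhs : HasSum (fun k => u (k + 1)) (c * a + b) := by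
    simpa only [hrec] using (hu.mul_left c).add hv
  linear_combination hshift.unique hrhs

section Analysis

variable {𝕜 : Type*} [NormedField 𝕜] {x y : 𝕜}

theorem one_sub_ne_zero_of_norm_lt_one {z : 𝕜} (hz : ‖z‖ < 1) : 1 - z ≠ 0 := by
  rw [sub_ne_zero]
  rintro rfl
  simp at hz

theorem norm_mul_lt_one (hx : ‖x‖ < 1) (hy : ‖y‖ < 1) : ‖x * y‖ < 1 := by
  rw [norm_mul]
  exact mul_lt_one_of_nonneg_of_lt_one_left (norm_nonneg x) hx hy.le

theorem summable_sq_of_summable_norm {ι R : Type*} [NormedRing R] [CompleteSpace R] {f : ι → R}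
    (hf : Summable fun i => ‖f i‖) : Summable fun i => f i ^ 2 := by
  refine .of_norm_bounded (hf.mul_left (∑' i, ‖f i‖)) fun i => ?_
  calc ‖f i ^ 2‖ ≤ ‖f i‖ * ‖f i‖ := by rw [sq]; exact norm_mul_le _ _
    _ ≤ (∑' i, ‖f i‖) * ‖f i‖ := by
      gcongr
      exact hf.le_tsum i fun j _ => norm_nonneg _

theorem summable_norm_completeHomogeneous (hx : ‖x‖ < 1) (hy : ‖y‖ < 1) :
    Summable fun k => ‖completeHomogeneous x y k‖ := by
  simpa only [completeHomogeneous, mul_comm (y ^ _)] using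
    summable_norm_sum_mul_range_of_summable_norm (summable_norm_geometric_of_norm_lt_one hy)
      (summable_norm_geometric_of_norm_lt_one hx)

variable [CompleteSpace 𝕜]

theorem hasSum_pow_mul_completeHomogeneous (hx : ‖x‖ < 1) (hy : ‖y‖ < 1) :
    HasSum (fun k => y ^ k * completeHomogeneous x y k) (1 / (1 - y ^ 2) * (1 / (1 - x * y))) := by
  obtain ⟨T, hT⟩ : Summable fun k => y ^ k * completeHomogeneous x y k := by
    refine .of_norm_bounded (summable_norm_completeHomogeneous hx hy) fun k => ?_
    rw [norm_mul, norm_pow]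
    exact mul_le_of_le_one_left (norm_nonneg _) (pow_le_one₀ (norm_nonneg y) hy.le)
  have hxy := hasSum_geometric_of_norm_lt_one (norm_mul_lt_one hx hy)
  have hlin := hT.one_sub_mul_eq_of_succ (c := y ^ 2) (hxy.mul_left (x * y)) fun k => by
    rw [completeHomogeneous.succ']; ring
  rw [completeHomogeneous.zero, pow_zero, mul_one] at hlin
  have h1 := one_sub_ne_zero_of_norm_lt_one (norm_mul_lt_one hy hy)
  have h2 := one_sub_ne_zero_of_norm_lt_one (norm_mul_lt_one hx hy)
  rw [← sq] at h1
  convert hT using 1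
  rw [div_mul_div_comm, one_mul, div_eq_iff (mul_ne_zero h1 h2), ← mul_assoc, mul_comm T, hlin,
    add_mul, mul_assoc, inv_mul_cancel₀ h2]
  ring

theorem hasSum_sq_completeHomogeneous (hx : ‖x‖ < 1) (hy : ‖y‖ < 1) :
    HasSum (fun k => completeHomogeneous x y k ^ 2)
      (1 / (1 - y ^ 2) * ((1 + x * y) / (1 - x * y)) * (1 / (1 - x ^ 2))) := by
  obtain ⟨S, hS⟩ : Summable fun k => completeHomogeneous x y k ^ 2 :=
    summable_sq_of_summable_norm (summable_norm_completeHomogeneous hx hy)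
  have hv := ((hasSum_pow_mul_completeHomogeneous hx hy).mul_left (2 * x * y)).add
    ((hasSum_geometric_of_norm_lt_one (norm_mul_lt_one hy hy)).mul_left (y ^ 2))
  have hlin := hS.one_sub_mul_eq_of_succ (c := x ^ 2) hv fun k => by
    rw [completeHomogeneous.succ]; ring
  rw [completeHomogeneous.zero, one_pow] at hlin
  have hx2 := one_sub_ne_zero_of_norm_lt_one (norm_mul_lt_one hx hx)
  have hy2 := one_sub_ne_zero_of_norm_lt_one (norm_mul_lt_one hy hy)
  have hxy := one_sub_ne_zero_of_norm_lt_one (norm_mul_lt_one hx hy)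
  rw [← sq] at hx2 hy2
  convert hS using 1
  field_simp at hlin ⊢
  linear_combination -hlin

end Analysis

theorem tsum_inner_sq (N α : ℝ) (hN0 : 0 ≤ N) (hN1 : N < 1) (hα0 : 0 ≤ α) (hα1 : α < 1) :
    ∑' k : ℕ, (∑ i ∈ Finset.range (k + 1), N ^ (k - i) * α ^ i) ^ 2
      = (1 / (1 - α ^ 2)) * ((1 + N * α) / (1 - N * α)) * (1 / (1 - N ^ 2)) := by
  have hN : ‖N‖ < 1 := by rwa [Real.norm_of_nonneg hN0]
  have hα : ‖α‖ < 1 := by rwa [Real.norm_of_nonneg hα0]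
  exact (hasSum_sq_completeHomogeneous hN hα).tsum_eq
end

section
/- For 0 < N < 1 and 0 < α < 1, ∑_{k=0}^∞ (∑_{i=0}^k N^{k-i} α^i)² = ∑_{i=1}^∞ i·α^{i-1}·N^{i-1}/(1-N²) + ∑_{i=1}^∞ i·N^{i-1}·α^{i+1}/(1-α²). -/
/-!
Put `S k = ∑_{i ≤ k} N^(k-i) α^i`, the Cauchy product of the geometric sequences `(N^k)` and
`(α^k)`, hence absolutely summable. From `S (k+1) = N S k + α^(k+1)`, shifting the index in
`U = ∑ α^k S k` and in `T = ∑ (S k)²` gives the linear equations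
`U = 1 + α N U + α²/(1-α²)` and `T = 1 + N² T + 2 N α U + α²/(1-α²)`, whence
`T = (1 + α N) / ((1 - N²)(1 - α²)(1 - α N))`. Both series on the right are multiples of
`∑ (i+1) (α N)^i = 1/(1 - α N)²`, and their sum is the same value because
`1/(1-N²) + α²/(1-α²) = (1 - α²N²)/((1-N²)(1-α²))`.
-/

open Finset

theorem Summable.tsum_eq_of_succ_eq_mul_add {R : Type*} [Ring R] [TopologicalSpace R]
    [IsTopologicalRing R] [T2Space R] {f g : ℕ → R} {c : R} (hf : Summable f) (hg : Summable g)
    (h : ∀ k, f (k + 1) = c * f k + g k) :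
    ∑' k, f k = f 0 + c * ∑' k, f k + ∑' k, g k := by
  conv_lhs =>
    rw [hf.tsum_eq_zero_add, tsum_congr h, (hf.mul_left c).tsum_add hg, hf.tsum_mul_left]
  rw [add_assoc]

theorem one_sub_ne_zero_of_norm_lt_one_s4 {R : Type*} [NormedRing R] [NormOneClass R] {r : R}
    (hr : ‖r‖ < 1) : 1 - r ≠ 0 := by
  rw [sub_ne_zero]
  rintro rfl
  simp at hr

theorem tsum_succ_mul_geometric {𝕜 : Type*} [NormedDivisionRing 𝕜] {r : 𝕜} (hr : ‖r‖ < 1) :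
    ∑' n : ℕ, ((n + 1 : ℕ) : 𝕜) * r ^ n = 1 / (1 - r) ^ 2 := by
  simpa using tsum_choose_mul_geometric_of_norm_lt_one 1 hr

def geomConv {R : Type*} [Semiring R] (N α : R) (k : ℕ) : R :=
  ∑ i ∈ range (k + 1), N ^ (k - i) * α ^ i

section geomConv

variable {R : Type*}

theorem geomConv_zero [Semiring R] (N α : R) : geomConv N α 0 = 1 := by
  simp [geomConv]

theorem geomConv_succ [CommSemiring R] (N α : R) (k : ℕ) :
    geomConv N α (k + 1) = N * geomConv N α k + α ^ (k + 1) := by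
  rw [geomConv, sum_range_succ, Nat.sub_self, pow_zero, one_mul, geomConv, mul_sum]
  congr 1
  refine sum_congr rfl fun i hi => ?_
  rw [Nat.sub_add_comm (mem_range_succ_iff.1 hi), pow_succ']
  ring

variable [NormedField R] {N α : R}

theorem summable_norm_geomConv (hN : ‖N‖ < 1) (hα : ‖α‖ < 1) :
    Summable fun k => ‖geomConv N α k‖ := by
  simpa only [geomConv, mul_comm (N ^ _)] using summable_norm_sum_mul_range_of_summable_norm
    (summable_norm_geometric_of_norm_lt_one hα) (summable_norm_geometric_of_norm_lt_one hN)

variable [CompleteSpace R]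

theorem summable_geomConv_sq (hN : ‖N‖ < 1) (hα : ‖α‖ < 1) :
    Summable fun k => geomConv N α k ^ 2 := by
  have hS := summable_norm_geomConv hN hα
  simpa only [sq] using hS.mul_tendsto_const hS.of_norm.tendsto_cofinite_zero

theorem summable_pow_mul_geomConv (hN : ‖N‖ < 1) (hα : ‖α‖ < 1) :
    Summable fun k => α ^ k * geomConv N α k := by
  simpa only [mul_comm (geomConv N α _)] using (summable_norm_geomConv hN hα).mul_tendsto_const
    (tendsto_pow_atTop_nhds_zero_of_norm_lt_one hα |>.mono_left Nat.cofinite_eq_atTop.le)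

theorem tsum_pow_mul_geomConv (hN : ‖N‖ < 1) (hα : ‖α‖ < 1) :
    ∑' k, α ^ k * geomConv N α k = 1 / ((1 - α ^ 2) * (1 - α * N)) := by
  have hα2 : ‖α ^ 2‖ < 1 := by rw [norm_pow]; exact pow_lt_one₀ (norm_nonneg _) hα two_ne_zero
  have hαN : ‖α * N‖ < 1 := by
    rw [norm_mul]; exact mul_lt_one_of_nonneg_of_lt_one_left (norm_nonneg _) hα hN.le
  have hshift := (summable_pow_mul_geomConv hN hα).tsum_eq_of_succ_eq_mul_add (c := α * N)
    ((summable_geometric_of_norm_lt_one hα2).mul_left (α ^ 2)) fun k => by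
      rw [geomConv_succ]; ring
  rw [tsum_mul_left (a := α ^ 2), tsum_geometric_of_norm_lt_one hα2, geomConv_zero] at hshift
  have h1 := one_sub_ne_zero_of_norm_lt_one_s4 hα2
  have h2 := one_sub_ne_zero_of_norm_lt_one_s4 hαN
  rw [eq_div_iff (mul_ne_zero h1 h2)]
  field_simp at hshift
  linear_combination hshift

theorem tsum_geomConv_sq (hN : ‖N‖ < 1) (hα : ‖α‖ < 1) :
    ∑' k, geomConv N α k ^ 2 = (1 + α * N) / ((1 - N ^ 2) * (1 - α ^ 2) * (1 - α * N)) := by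
  have hN2 : ‖N ^ 2‖ < 1 := by rw [norm_pow]; exact pow_lt_one₀ (norm_nonneg _) hN two_ne_zero
  have hα2 : ‖α ^ 2‖ < 1 := by rw [norm_pow]; exact pow_lt_one₀ (norm_nonneg _) hα two_ne_zero
  have hαN : ‖α * N‖ < 1 := by
    rw [norm_mul]; exact mul_lt_one_of_nonneg_of_lt_one_left (norm_nonneg _) hα hN.le
  have hU := (summable_pow_mul_geomConv hN hα).mul_left (2 * N * α)
  have hgeom := (summable_geometric_of_norm_lt_one hα2).mul_left (α ^ 2)
  have hshift := (summable_geomConv_sq hN hα).tsum_eq_of_succ_eq_mul_add (c := N ^ 2)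
    (hU.add hgeom) fun k => by rw [geomConv_succ]; ring
  rw [hU.tsum_add hgeom, tsum_mul_left, tsum_mul_left, tsum_pow_mul_geomConv hN hα,
    tsum_geometric_of_norm_lt_one hα2, geomConv_zero] at hshift
  have h1 := one_sub_ne_zero_of_norm_lt_one_s4 hN2
  have h2 := one_sub_ne_zero_of_norm_lt_one_s4 hα2
  have h3 := one_sub_ne_zero_of_norm_lt_one_s4 hαN
  rw [eq_div_iff (mul_ne_zero (mul_ne_zero h1 h2) h3)]
  rw [mul_comm α N] at h3
  field_simp at hshift
  linear_combination hshift

end geomConv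

/-- The split of ∑_k (∑_{i=0}^k N^{k-i} α^i)² into two series (series indexed from i = 1
in the paper, reindexed here as i ≥ 0 via i ↦ i+1). -/
theorem tsum_split (N α : ℝ) (hN0 : 0 < N) (hN1 : N < 1) (hα0 : 0 < α) (hα1 : α < 1) :
    ∑' k : ℕ, (∑ i ∈ Finset.range (k + 1), N ^ (k - i) * α ^ i) ^ 2
      = (∑' i : ℕ, ((i + 1 : ℕ) : ℝ) * α ^ i * N ^ i / (1 - N ^ 2))
        + ∑' i : ℕ, ((i + 1 : ℕ) : ℝ) * N ^ i * α ^ (i + 2) / (1 - α ^ 2) := by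
  have hN : ‖N‖ < 1 := by rwa [Real.norm_of_nonneg hN0.le]
  have hα : ‖α‖ < 1 := by rwa [Real.norm_of_nonneg hα0.le]
  have hαN : ‖α * N‖ < 1 := by
    rw [norm_mul]; exact mul_lt_one_of_nonneg_of_lt_one_left (norm_nonneg _) hα hN.le
  have hA (i : ℕ) : ((i + 1 : ℕ) : ℝ) * α ^ i * N ^ i / (1 - N ^ 2)
      = (1 - N ^ 2)⁻¹ * (((i + 1 : ℕ) : ℝ) * (α * N) ^ i) := by ring
  have hB (i : ℕ) : ((i + 1 : ℕ) : ℝ) * N ^ i * α ^ (i + 2) / (1 - α ^ 2)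
      = α ^ 2 / (1 - α ^ 2) * (((i + 1 : ℕ) : ℝ) * (α * N) ^ i) := by ring
  change ∑' k, geomConv N α k ^ 2 = _
  rw [tsum_geomConv_sq hN hα, tsum_congr hA, tsum_congr hB, tsum_mul_left, tsum_mul_left,
    tsum_succ_mul_geometric hαN]
  have h1 : 1 - N ^ 2 ≠ 0 := by nlinarith
  have h2 : 1 - α ^ 2 ≠ 0 := by nlinarith
  have h3 : 1 - α * N ≠ 0 := by nlinarith
  field_simp
  ring
end

section
/- Let A ∈ ℝ^{n×n}, C ∈ ℝ^{p×n}, L ∈ ℝ^{n×p} with N := ‖A-LC‖ < 1 (spectral norm), and let K > 0, 0 ≤ α < 1. Let y, y' : ℕ → ℝ^p be sequences such that there exists k₀ with y(k) = y'(k) for k < k₀ and ‖y(k) - y'(k)‖ ≤ K·α^{k-k₀} for k ≥ k₀. Define z(0) = z'(0) = 0 and z(k+1) = (A-LC)z(k) + L y(k), z'(k+1) = (A-LC)z'(k) + L y'(k). Then ∑_{k=0}^∞ ‖z(k) - z'(k)‖² ≤ (K²/(1-α²)) · ((1+Nα)/(1-Nα)) · (‖L‖²/(1-N²)). -/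
noncomputable def specNorm {m n : ℕ} (M : Matrix (Fin m) (Fin n) ℝ) : ℝ :=
  ‖LinearMap.toContinuousLinearMap (Matrix.toEuclideanLin M)‖

lemma specNorm_nonneg {m n : ℕ} (M : Matrix (Fin m) (Fin n) ℝ) : 0 ≤ specNorm M :=
  norm_nonneg _

lemma norm_toEuclideanLin_apply_le {m n : ℕ} (M : Matrix (Fin m) (Fin n) ℝ)
    (v : EuclideanSpace ℝ (Fin n)) :
    ‖Matrix.toEuclideanLin M v‖ ≤ specNorm M * ‖v‖ := by
  have := (LinearMap.toContinuousLinearMap (Matrix.toEuclideanLin M)).le_opNorm v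
  simpa [specNorm] using this

/-- The comparison sequence `t m = ∑_{i+j=m} N^i α^j`. -/
noncomputable def tseq (N α : ℝ) : ℕ → ℝ
  | 0 => 1
  | m + 1 => N * tseq N α m + α ^ (m + 1)

lemma tseq_nonneg {N α : ℝ} (hN : 0 ≤ N) (hα : 0 ≤ α) : ∀ m, 0 ≤ tseq N α m
  | 0 => by simp [tseq]
  | m + 1 => by
      have := tseq_nonneg hN hα m
      have := pow_nonneg hα (m + 1)
      simp only [tseq]
      positivity

lemma geom_aux (r : ℝ) (h0 : 0 ≤ r) (h1 : r < 1) (n : ℕ) :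
    ∑ i ∈ Finset.range n, r ^ i ≤ 1 / (1 - r) := by
  have hpos : (0:ℝ) < 1 - r := by linarith
  have e : (r ^ n - 1) / (r - 1) = (1 - r ^ n) / (1 - r) := by
    rw [div_eq_div_iff (by linarith) (by linarith)]; ring
  rw [geom_sum_eq h1.ne, e]
  gcongr
  nlinarith [pow_nonneg h0 n]

/-- Joint partial-sum bounds for `P_M = ∑ α^{m+1} t m` and `S_M = ∑ t m ^ 2`. -/
lemma tseq_partial {N α : ℝ} (hN0 : 0 ≤ N) (hN1 : N < 1) (hα0 : 0 ≤ α) (hα1 : α < 1)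
    (M : ℕ) :
    (∑ m ∈ Finset.range M, α ^ (m + 1) * tseq N α m ≤ α / ((1 - α ^ 2) * (1 - N * α))) ∧
    (∑ m ∈ Finset.range M, tseq N α m ^ 2
        ≤ 1 / (1 - α ^ 2) * ((1 + N * α) / (1 - N * α)) * (1 / (1 - N ^ 2))) := by
  have hα2 : α ^ 2 < 1 := by nlinarith
  have hNα : N * α < 1 := by nlinarith
  have hN2 : N ^ 2 < 1 := by nlinarith
  have hd1 : (0:ℝ) < 1 - α ^ 2 := by linarith
  have hd2 : (0:ℝ) < 1 - N * α := by linarith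
  have hd3 : (0:ℝ) < 1 - N ^ 2 := by linarith
  induction M with
  | zero =>
      constructor <;> · simp only [Finset.range_zero, Finset.sum_empty]; positivity
  | succ M ih =>
      obtain ⟨hP, hS⟩ := ih
      have hQ : ∑ m ∈ Finset.range M, (α ^ 2) ^ m ≤ 1 / (1 - α ^ 2) :=
        geom_aux _ (by positivity) hα2 M
      constructor
      · have expand : ∑ m ∈ Finset.range (M + 1), α ^ (m + 1) * tseq N α m
            = N * α * (∑ m ∈ Finset.range M, α ^ (m + 1) * tseq N α m)
              + α ^ 3 * (∑ m ∈ Finset.range M, (α ^ 2) ^ m) + α := by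
          rw [Finset.sum_range_succ']
          rw [Finset.mul_sum, Finset.mul_sum, ← Finset.sum_add_distrib]
          simp only [tseq]
          congr 1
          · apply Finset.sum_congr rfl
            intro i _
            ring
          · simp [tseq]
        rw [expand]
        have key : N * α * (α / ((1 - α ^ 2) * (1 - N * α))) + α ^ 3 * (1 / (1 - α ^ 2)) + α
            = α / ((1 - α ^ 2) * (1 - N * α)) := by
          field_simp
          ring
        calc N * α * (∑ m ∈ Finset.range M, α ^ (m + 1) * tseq N α m)
              + α ^ 3 * (∑ m ∈ Finset.range M, (α ^ 2) ^ m) + α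
            ≤ N * α * (α / ((1 - α ^ 2) * (1 - N * α))) + α ^ 3 * (1 / (1 - α ^ 2)) + α := by
              gcongr
          _ = α / ((1 - α ^ 2) * (1 - N * α)) := key
      · have expand : ∑ m ∈ Finset.range (M + 1), tseq N α m ^ 2
            = N ^ 2 * (∑ m ∈ Finset.range M, tseq N α m ^ 2)
              + 2 * N * (∑ m ∈ Finset.range M, α ^ (m + 1) * tseq N α m)
              + α ^ 2 * (∑ m ∈ Finset.range M, (α ^ 2) ^ m) + 1 := by
          rw [Finset.sum_range_succ']
          rw [Finset.mul_sum, Finset.mul_sum, Finset.mul_sum,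
            ← Finset.sum_add_distrib, ← Finset.sum_add_distrib]
          simp only [tseq]
          congr 1
          · apply Finset.sum_congr rfl
            intro i _
            ring
          · simp [tseq]
        rw [expand]
        have key : N ^ 2 * (1 / (1 - α ^ 2) * ((1 + N * α) / (1 - N * α)) * (1 / (1 - N ^ 2)))
              + 2 * N * (α / ((1 - α ^ 2) * (1 - N * α))) + α ^ 2 * (1 / (1 - α ^ 2)) + 1
            = 1 / (1 - α ^ 2) * ((1 + N * α) / (1 - N * α)) * (1 / (1 - N ^ 2)) := by
          field_simp
          ring
        calc N ^ 2 * (∑ m ∈ Finset.range M, tseq N α m ^ 2)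
              + 2 * N * (∑ m ∈ Finset.range M, α ^ (m + 1) * tseq N α m)
              + α ^ 2 * (∑ m ∈ Finset.range M, (α ^ 2) ^ m) + 1
            ≤ N ^ 2 * (1 / (1 - α ^ 2) * ((1 + N * α) / (1 - N * α)) * (1 / (1 - N ^ 2)))
              + 2 * N * (α / ((1 - α ^ 2) * (1 - N * α))) + α ^ 2 * (1 / (1 - α ^ 2)) + 1 := by
              gcongr
          _ = _ := key

/-- Shifted version of `tseq`, vanishing up to `k₀`. -/
noncomputable def wseq (N α : ℝ) (k₀ k : ℕ) : ℝ :=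
  if k ≤ k₀ then 0 else tseq N α (k - k₀ - 1)

lemma wseq_sq_sum_eq (N α : ℝ) (k₀ : ℕ) : ∀ M : ℕ,
    ∑ k ∈ Finset.range M, wseq N α k₀ k ^ 2
      = ∑ m ∈ Finset.range (M - (k₀ + 1)), tseq N α m ^ 2 := by
  intro M
  induction M with
  | zero => simp
  | succ M ih =>
      rw [Finset.sum_range_succ, ih]
      by_cases h : M ≤ k₀
      · have h1 : M + 1 - (k₀ + 1) = M - (k₀ + 1) := by omega
        rw [h1, wseq, if_pos h]
        ring
      · have h1 : M + 1 - (k₀ + 1) = (M - (k₀ + 1)) + 1 := by omega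
        rw [h1, Finset.sum_range_succ, wseq, if_neg h]
        have h2 : M - k₀ - 1 = M - (k₀ + 1) := by omega
        rw [h2]

/-- Sensitivity bound for the Luenberger observer (Proposition 1). -/
theorem luenberger_sensitivity_bound {n p : ℕ}
    (A : Matrix (Fin n) (Fin n) ℝ) (C : Matrix (Fin p) (Fin n) ℝ) (L : Matrix (Fin n) (Fin p) ℝ)
    (hN : specNorm (A - L * C) < 1)
    (K α : ℝ) (hK : 0 < K) (hα0 : 0 ≤ α) (hα1 : α < 1)
    (y y' : ℕ → EuclideanSpace ℝ (Fin p)) (k₀ : ℕ)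
    (hy1 : ∀ k < k₀, y k = y' k)
    (hy2 : ∀ k ≥ k₀, ‖y k - y' k‖ ≤ K * α ^ (k - k₀))
    (z z' : ℕ → EuclideanSpace ℝ (Fin n))
    (hz0 : z 0 = 0) (hz0' : z' 0 = 0)
    (hz : ∀ k, z (k + 1)
        = Matrix.toEuclideanLin (A - L * C) (z k) + Matrix.toEuclideanLin L (y k))
    (hz' : ∀ k, z' (k + 1)
        = Matrix.toEuclideanLin (A - L * C) (z' k) + Matrix.toEuclideanLin L (y' k)) :
    ∑' k : ℕ, ‖z k - z' k‖ ^ 2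
      ≤ (K ^ 2 / (1 - α ^ 2))
        * ((1 + specNorm (A - L * C) * α) / (1 - specNorm (A - L * C) * α))
        * (specNorm L ^ 2 / (1 - specNorm (A - L * C) ^ 2)) := by
  set N := specNorm (A - L * C) with hNdef
  set Nl := specNorm L with hNldef
  have hN0 : 0 ≤ N := specNorm_nonneg _
  have hNl0 : 0 ≤ Nl := specNorm_nonneg _
  -- pointwise bound on the error
  have key : ∀ k, ‖z k - z' k‖ ≤ Nl * K * wseq N α k₀ k := by
    intro k
    induction k with
    | zero =>
        simp [hz0, hz0', wseq]
    | succ k ih =>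
        have hrec : z (k + 1) - z' (k + 1)
            = Matrix.toEuclideanLin (A - L * C) (z k - z' k)
              + Matrix.toEuclideanLin L (y k - y' k) := by
          have e1 := map_sub (Matrix.toEuclideanLin (A - L * C)) (z k) (z' k)
          have e2 := map_sub (Matrix.toEuclideanLin L) (y k) (y' k)
          rw [hz, hz', e1, e2]
          abel
        have hbound : ‖z (k + 1) - z' (k + 1)‖ ≤ N * ‖z k - z' k‖ + Nl * ‖y k - y' k‖ := by
          rw [hrec]
          calc ‖Matrix.toEuclideanLin (A - L * C) (z k - z' k)
                + Matrix.toEuclideanLin L (y k - y' k)‖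
              ≤ ‖Matrix.toEuclideanLin (A - L * C) (z k - z' k)‖
                + ‖Matrix.toEuclideanLin L (y k - y' k)‖ := norm_add_le _ _
            _ ≤ N * ‖z k - z' k‖ + Nl * ‖y k - y' k‖ := by
                gcongr <;> [exact norm_toEuclideanLin_apply_le _ _;
                  exact norm_toEuclideanLin_apply_le _ _]
        by_cases hk : k < k₀
        · -- before k₀: everything vanishes
          have hy0 : y k - y' k = 0 := by rw [hy1 k hk]; simp
          have hwk : wseq N α k₀ k = 0 := by simp [wseq, Nat.le_of_lt hk]
          have hwk1 : wseq N α k₀ (k + 1) = 0 := by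
            unfold wseq; rw [if_pos (by omega)]
          rw [hwk1]
          have : ‖z k - z' k‖ ≤ 0 := by rw [hwk] at ih; linarith [ih]
          have hz0'' : ‖z k - z' k‖ = 0 := le_antisymm this (norm_nonneg _)
          rw [hy0] at hbound
          simp [hz0''] at hbound
          simpa using hbound
        · push_neg at hk
          have hd : ‖y k - y' k‖ ≤ K * α ^ (k - k₀) := hy2 k hk
          have hw1 : wseq N α k₀ (k + 1) = tseq N α (k - k₀) := by
            rw [wseq, if_neg (by omega)]
            congr 1
            omega
          have hstep : N * wseq N α k₀ k + α ^ (k - k₀) ≤ tseq N α (k - k₀) := by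
            rcases Nat.eq_or_lt_of_le hk with heq | hlt
            · have : k - k₀ = 0 := by omega
              rw [this]
              have : wseq N α k₀ k = 0 := by rw [wseq, if_pos (by omega)]
              rw [this]
              simp [tseq]
            · have hm : k - k₀ = (k - k₀ - 1) + 1 := by omega
              have : wseq N α k₀ k = tseq N α (k - k₀ - 1) := by
                rw [wseq, if_neg (by omega)]
              rw [this, hm]
              simp only [tseq]
              rw [← hm]
          rw [hw1]
          calc ‖z (k + 1) - z' (k + 1)‖
              ≤ N * ‖z k - z' k‖ + Nl * ‖y k - y' k‖ := hbound
            _ ≤ N * (Nl * K * wseq N α k₀ k) + Nl * (K * α ^ (k - k₀)) := by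
                gcongr
            _ = Nl * K * (N * wseq N α k₀ k + α ^ (k - k₀)) := by ring
            _ ≤ Nl * K * tseq N α (k - k₀) := by
                have hnn : 0 ≤ Nl * K := mul_nonneg hNl0 hK.le
                exact mul_le_mul_of_nonneg_left hstep hnn
  -- sum the squares
  set Sinf : ℝ := 1 / (1 - α ^ 2) * ((1 + N * α) / (1 - N * α)) * (1 / (1 - N ^ 2)) with hSdef
  have hpartial : ∀ M : ℕ, ∑ k ∈ Finset.range M, ‖z k - z' k‖ ^ 2 ≤ (Nl * K) ^ 2 * Sinf := by
    intro M
    have h1 : ∑ k ∈ Finset.range M, ‖z k - z' k‖ ^ 2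
        ≤ ∑ k ∈ Finset.range M, (Nl * K) ^ 2 * wseq N α k₀ k ^ 2 := by
      apply Finset.sum_le_sum
      intro k _
      have := key k
      have hnn : 0 ≤ Nl * K * wseq N α k₀ k := le_trans (norm_nonneg _) this
      calc ‖z k - z' k‖ ^ 2 ≤ (Nl * K * wseq N α k₀ k) ^ 2 := by
            apply sq_le_sq' _ this
            linarith [norm_nonneg (z k - z' k)]
        _ = (Nl * K) ^ 2 * wseq N α k₀ k ^ 2 := by ring
    have h2 : ∑ k ∈ Finset.range M, wseq N α k₀ k ^ 2
        ≤ ∑ m ∈ Finset.range M, tseq N α m ^ 2 := by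
      rw [wseq_sq_sum_eq]
      apply Finset.sum_le_sum_of_subset_of_nonneg
      · exact Finset.range_subset_range.mpr (by omega)
      · intro i _ _
        positivity
    have h3 := (tseq_partial hN0 hN hα0 hα1 M).2
    calc ∑ k ∈ Finset.range M, ‖z k - z' k‖ ^ 2
        ≤ ∑ k ∈ Finset.range M, (Nl * K) ^ 2 * wseq N α k₀ k ^ 2 := h1
      _ = (Nl * K) ^ 2 * ∑ k ∈ Finset.range M, wseq N α k₀ k ^ 2 := by
          rw [Finset.mul_sum]
      _ ≤ (Nl * K) ^ 2 * Sinf := by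
          apply mul_le_mul_of_nonneg_left _ (by positivity)
          exact le_trans h2 h3
  have := Real.tsum_le_of_sum_range_le (fun k => by positivity) hpartial
  calc ∑' k : ℕ, ‖z k - z' k‖ ^ 2 ≤ (Nl * K) ^ 2 * Sinf := this
    _ = (K ^ 2 / (1 - α ^ 2)) * ((1 + N * α) / (1 - N * α)) * (Nl ^ 2 / (1 - N ^ 2)) := by
        rw [hSdef]
        ring
end

section
/- Let A ∈ ℝ_+^{n×n}, c ∈ ℝ^n with c > 0 entrywise, and define the feasible set F = { l ∈ ℝ^n : l ≥ 0, A - l cᵀ ≥ 0 }. Let η > 0 satisfy η ≤ ‖l̂‖₂ where l̂_i = min_j a_{ij}/c_j, and suppose l̂ ∈ F. Then min{ ‖A - l cᵀ‖ : l ∈ F, ‖l‖₂ = η } = min{ ‖A - l cᵀ‖ : l ∈ F, ‖l‖₂ ≤ η }, where ‖·‖ is the spectral norm (assuming both minima exist). -/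
/-!
Every feasible `l` lies entrywise below `l̂`, and the feasible set is convex. Moving from a feasible
`l` with `‖l‖ ≤ η` towards `l̂` therefore stays feasible while the nonnegative residual `A - l cᵀ`
decreases entrywise; on nonnegative matrices the spectral norm is monotone, since
`|B x| ≤ C |x|` entrywise when `0 ≤ B ≤ C`. By the intermediate value theorem the segment from `l`
to `l̂` meets the sphere `‖·‖ = η`, giving a point of the smaller problem that is at least as good.
-/

open Matrix

lemma EuclideanSpace.norm_le_norm_of_forall_abs_le {ι : Type*} [Fintype ι]
    {u v : EuclideanSpace ℝ ι} (h : ∀ i, |u i| ≤ |v i|) : ‖u‖ ≤ ‖v‖ := by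
  rw [EuclideanSpace.norm_eq, EuclideanSpace.norm_eq]
  gcongr with i
  simpa only [Real.norm_eq_abs] using h i

lemma EuclideanSpace.apply_mem_Icc_of_mem_segment {ι : Type*} {x y w : EuclideanSpace ℝ ι}
    (hxy : ∀ i, x i ≤ y i) (hw : w ∈ segment ℝ x y) (i : ι) : w i ∈ Set.Icc (x i) (y i) := by
  obtain ⟨a, b, ha, hb, hab, rfl⟩ := hw
  obtain rfl : a = 1 - b := by linarith
  simp only [PiLp.add_apply, PiLp.smul_apply, smul_eq_mul, Set.mem_Icc]
  have hxy' := sub_nonneg.2 (hxy i)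
  constructor <;> nlinarith [mul_nonneg ha hxy', mul_nonneg hb hxy']

lemma exists_mem_segment_norm_eq {E : Type*} [SeminormedAddCommGroup E] [NormedSpace ℝ E]
    {u v : E} {η : ℝ} (hu : ‖u‖ ≤ η) (hv : η ≤ ‖v‖) : ∃ w ∈ segment ℝ u v, ‖w‖ = η :=
  (convex_segment u v).isPreconnected.intermediate_value (left_mem_segment ℝ u v)
    (right_mem_segment ℝ u v) continuous_norm.continuousOn ⟨hu, hv⟩

lemma Matrix.abs_mulVec_apply_le {m n : Type*} [Fintype n] {B C : Matrix m n ℝ}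
    (hB : ∀ i j, 0 ≤ B i j) (hBC : ∀ i j, B i j ≤ C i j) (x : n → ℝ) (i : m) :
    |(B *ᵥ x) i| ≤ (C *ᵥ fun j => |x j|) i :=
  calc |∑ j, B i j * x j| ≤ ∑ j, |B i j * x j| := Finset.abs_sum_le_sum_abs _ _
    _ ≤ ∑ j, C i j * |x j| := Finset.sum_le_sum fun j _ => by
        rw [abs_mul, abs_of_nonneg (hB i j)]
        exact mul_le_mul_of_nonneg_right (hBC i j) (abs_nonneg _)

lemma specNorm_le_specNorm {m n : ℕ} {B C : Matrix (Fin m) (Fin n) ℝ}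
    (hB : ∀ i j, 0 ≤ B i j) (hBC : ∀ i j, B i j ≤ C i j) : specNorm B ≤ specNorm C := by
  refine ContinuousLinearMap.opNorm_le_bound _ (norm_nonneg _) fun x => ?_
  let y : EuclideanSpace ℝ (Fin n) := WithLp.toLp 2 fun j => |x j|
  have hy : ‖y‖ = ‖x‖ := by simp [y, EuclideanSpace.norm_eq]
  have hBx : ∀ i, |(B *ᵥ x) i| ≤ |(C *ᵥ y) i| := fun i =>
    (abs_mulVec_apply_le hB hBC x i).trans (le_abs_self _)
  calc ‖toEuclideanLin B x‖ ≤ ‖toEuclideanLin C y‖ :=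
        EuclideanSpace.norm_le_norm_of_forall_abs_le hBx
    _ ≤ specNorm C * ‖y‖ := (toEuclideanLin C).toContinuousLinearMap.le_opNorm y
    _ = specNorm C * ‖x‖ := by rw [hy]

lemma specNorm_sub_mul_le {m n : ℕ} {A : Matrix (Fin m) (Fin n) ℝ} {c : Fin n → ℝ}
    {l w : Fin m → ℝ} (hc : ∀ j, 0 ≤ c j) (hlw : ∀ i, l i ≤ w i)
    (hw : ∀ i j, 0 ≤ A i j - w i * c j) :
    specNorm (of fun i j => A i j - w i * c j) ≤ specNorm (of fun i j => A i j - l i * c j) :=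
  specNorm_le_specNorm hw fun i j => by
    simpa only [of_apply, sub_le_sub_iff_left] using mul_le_mul_of_nonneg_right (hlw i) (hc j)

theorem min_eq_min_general {n : ℕ} [NeZero n]
    (A : Matrix (Fin n) (Fin n) ℝ)
    (c : Fin n → ℝ) (hc : ∀ j, 0 < c j) (η : ℝ)
    (lhat : EuclideanSpace ℝ (Fin n))
    (hlhat : ∀ i, lhat i = Finset.univ.inf' Finset.univ_nonempty (fun j => A i j / c j))
    (hηle : η ≤ ‖lhat‖)
    (hfeas : (∀ i, 0 ≤ lhat i) ∧ (∀ i j, 0 ≤ A i j - lhat i * c j))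
    (m₁ m₂ : ℝ)
    (h1 : IsLeast {x : ℝ | ∃ l : EuclideanSpace ℝ (Fin n), (∀ i, 0 ≤ l i)
        ∧ (∀ i j, 0 ≤ A i j - l i * c j) ∧ ‖l‖ = η
        ∧ x = specNorm (Matrix.of fun i j => A i j - l i * c j)} m₁)
    (h2 : IsLeast {x : ℝ | ∃ l : EuclideanSpace ℝ (Fin n), (∀ i, 0 ≤ l i)
        ∧ (∀ i j, 0 ≤ A i j - l i * c j) ∧ ‖l‖ ≤ η
        ∧ x = specNorm (Matrix.of fun i j => A i j - l i * c j)} m₂) :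
    m₁ = m₂ := by
  refine le_antisymm ?_ (h2.2 ?_)
  · obtain ⟨l, hl0, hlA, hlη, rfl⟩ := h2.1
    have hl_le : ∀ i, l i ≤ lhat i := fun i => (hlhat i).symm ▸
      Finset.le_inf' _ _ fun j _ => (le_div_iff₀ (hc j)).2 (by linarith [hlA i j])
    obtain ⟨w, hw, hwη⟩ := exists_mem_segment_norm_eq hlη hηle
    have hw_mem := EuclideanSpace.apply_mem_Icc_of_mem_segment hl_le hw
    have hwA : ∀ i j, 0 ≤ A i j - w i * c j := fun i j => by
      nlinarith [hfeas.2 i j, (hw_mem i).2, hc j]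
    calc m₁ ≤ specNorm (of fun i j => A i j - w i * c j) :=
          h1.2 ⟨w, fun i => (hl0 i).trans (hw_mem i).1, hwA, hwη, rfl⟩
      _ ≤ specNorm (of fun i j => A i j - l i * c j) :=
          specNorm_sub_mul_le (fun j => (hc j).le) (fun i => (hw_mem i).1) hwA
  · obtain ⟨l, hl0, hlA, hlη, rfl⟩ := h1.1
    exact ⟨l, hl0, hlA, hlη.le, rfl⟩

/-- The minimum of ‖A - l cᵀ‖ over the feasible set with ‖l‖ = η equals the minimum with
‖l‖ ≤ η (Lemma on scaling, single output case). -/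
theorem min_eq_min {n : ℕ} [NeZero n]
    (A : Matrix (Fin n) (Fin n) ℝ) (hA : ∀ i j, 0 ≤ A i j)
    (c : Fin n → ℝ) (hc : ∀ j, 0 < c j) (η : ℝ) (hη : 0 < η)
    (lhat : EuclideanSpace ℝ (Fin n))
    (hlhat : ∀ i, lhat i = Finset.univ.inf' Finset.univ_nonempty (fun j => A i j / c j))
    (hηle : η ≤ ‖lhat‖)
    (hfeas : (∀ i, 0 ≤ lhat i) ∧ (∀ i j, 0 ≤ A i j - lhat i * c j))
    (m₁ m₂ : ℝ)
    (h1 : IsLeast {x : ℝ | ∃ l : EuclideanSpace ℝ (Fin n), (∀ i, 0 ≤ l i)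
        ∧ (∀ i j, 0 ≤ A i j - l i * c j) ∧ ‖l‖ = η
        ∧ x = specNorm (Matrix.of fun i j => A i j - l i * c j)} m₁)
    (h2 : IsLeast {x : ℝ | ∃ l : EuclideanSpace ℝ (Fin n), (∀ i, 0 ≤ l i)
        ∧ (∀ i j, 0 ≤ A i j - l i * c j) ∧ ‖l‖ ≤ η
        ∧ x = specNorm (Matrix.of fun i j => A i j - l i * c j)} m₂) :
    m₁ = m₂ :=
  min_eq_min_general A c hc η lhat hlhat hηle hfeas m₁ m₂ h1 h2
end
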